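/- arXiv:2004.05126 — 2 statements merged into one kernel-verified Lean document; each statement's English description precedes it below -/
import Mathlib

section
/- Suppose α is irrational with convergents p_n/q_n and there is a constant M and N₀ such that log(q_{n+1})/q_n < M for all n ≥ N₀. Then for every ε > M/(2π·0.05) and all sufficiently large |k|, one has |e^{2πikα} − 1| > e^{−2π|k|·0.09·ε}. -/
/-!
If `q_n ≤ |k| < q_{n+1}`, the continued fraction of `α` gives `|kα - p| ≥ 1/(2 q_n q_{n+1})` for
every integer `p`, and the growth hypothesis gives `q_{n+1} < e^{M q_n} ≤ e^{M|k|}`. Since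
`|e^{2πit} - 1| ≥ 4 dist(t, ℤ)`, the left-hand side is at least `2 e^{-M|k|} / |k|`, which
eventually beats `e^{-c|k|}` because `c = 2π · 0.09 · ε > 1.8 M > M`.
-/

noncomputable def cfq (α : ℝ) (n : ℕ) : ℝ := (GenContFract.of α).dens n

open Filter Real

namespace GenContFract

theorem exists_int_contsAux_of {K : Type*} [Field K] [LinearOrder K] [IsStrictOrderedRing K]
    [FloorRing K] (v : K) : ∀ n, ∃ a b : ℤ, (GenContFract.of v).contsAux n = ⟨a, b⟩
  | 0 => ⟨1, 0, by simp [zeroth_contAux_eq_one_zero]⟩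
  | 1 => ⟨⌊v⌋, 1, by simp [first_contAux_eq_h_one, of_h_eq_floor]⟩
  | n + 2 => by
    obtain ⟨a, b, h⟩ := exists_int_contsAux_of v n
    obtain ⟨a', b', h'⟩ := exists_int_contsAux_of v (n + 1)
    rcases hs : (GenContFract.of v).s.get? n with _ | gp
    · exact ⟨a', b', (contsAux_stable_step_of_terminated hs).trans h'⟩
    · obtain ⟨hgpa, z, hgpb⟩ := of_partNum_eq_one_and_exists_int_partDen_eq hs
      refine ⟨z * a' + a, z * b' + b, ?_⟩
      rw [contsAux_recurrence hs h h', hgpa, hgpb]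
      push_cast
      simp

end GenContFract

open GenContFract

noncomputable def cfp (α : ℝ) (n : ℕ) : ℝ := (GenContFract.of α).nums n

theorem exists_int_cfp_eq_and_cfq_eq (α : ℝ) (n : ℕ) : ∃ P Q : ℤ, cfp α n = P ∧ cfq α n = Q := by
  obtain ⟨P, Q, h⟩ := exists_int_contsAux_of α (n + 1)
  exact ⟨P, Q, by simp [cfp, num_eq_conts_a, nth_cont_eq_succ_nth_contAux, h],
    by simp [cfq, den_eq_conts_b, nth_cont_eq_succ_nth_contAux, h]⟩

theorem cfq_mono (α : ℝ) : Monotone (cfq α) :=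
  monotone_nat_of_le_succ fun _ => of_den_mono

theorem one_le_cfq (α : ℝ) (n : ℕ) : 1 ≤ cfq α n := by
  simpa [cfq, zeroth_den_eq_one] using cfq_mono α n.zero_le

theorem exists_le_and_lt_succ_of_tendsto_atTop {β : Type*} [LinearOrder β] [NoMaxOrder β]
    {f : ℕ → β} (hf : Tendsto f atTop atTop) {x : β} (hx : f 0 ≤ x) :
    ∃ n, f n ≤ x ∧ x < f (n + 1) := by
  by_contra! h
  have hle : ∀ n, f n ≤ x := fun n => Nat.rec hx (fun n ih => h n ih) n
  obtain ⟨n, hn⟩ := (hf.eventually_gt_atTop x).exists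
  exact (hle n).not_gt hn

theorem four_mul_abs_sub_round_le_norm_exp_sub_one (t : ℝ) :
    4 * |t - round t| ≤ ‖Complex.exp (2 * π * Complex.I * t) - 1‖ := by
  have hper : Complex.exp (2 * π * Complex.I * t) =
      Complex.exp (Complex.I * ↑(2 * π * (t - round t))) := by
    rw [← mul_one (Complex.exp (Complex.I * _)), ← Complex.exp_int_mul_two_pi_mul_I (round t),
      ← Complex.exp_add]
    push_cast
    ring_nf
  have hsin := mul_abs_le_abs_sin (x := π * (t - round t)) (by
    rw [abs_mul, abs_of_pos pi_pos]
    nlinarith [abs_sub_round t, pi_pos])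
  rw [hper, Complex.norm_exp_I_mul_ofReal_sub_one, norm_mul, Real.norm_eq_abs, Real.norm_eq_abs,
    abs_two, show 2 * π * (t - round t) / 2 = π * (t - round t) by ring]
  rw [abs_mul, abs_of_pos pi_pos, ← mul_assoc, div_mul_cancel₀ _ pi_pos.ne'] at hsin
  linarith

theorem eventually_exp_neg_mul_lt {M c : ℝ} (h : M < c) :
    ∀ᶠ x in atTop, exp (-(c * x)) < 2 * exp (-(M * x)) / x := by
  filter_upwards [(isLittleO_pow_exp_pos_mul_atTop 1 (sub_pos.2 h)).bound one_pos,
    eventually_gt_atTop 0] with x hx hx0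
  rw [pow_one, one_mul, norm_of_nonneg hx0.le, norm_of_nonneg (exp_pos _).le] at hx
  rw [lt_div_iff₀ hx0]
  calc exp (-(c * x)) * x ≤ exp (-(c * x)) * exp ((c - M) * x) := by gcongr
    _ = exp (-(M * x)) := by rw [← exp_add]; ring_nf
    _ < 2 * exp (-(M * x)) := by linarith [exp_pos (-(M * x))]

section Irrational

variable {α : ℝ} (hα : Irrational α)
include hα

theorem Irrational.not_terminatedAt_of (n : ℕ) : ¬(GenContFract.of α).TerminatedAt n :=
  fun h => hα <| by
    obtain ⟨q, hq⟩ := (terminates_iff_rat α).1 ⟨n, h⟩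
    exact ⟨q, hq.symm⟩

theorem cfq_add_cfq_succ_le (n : ℕ) : cfq α n + cfq α (n + 1) ≤ cfq α (n + 2) := by
  obtain ⟨gp, hs⟩ := Option.ne_none_iff_exists'.1 (hα.not_terminatedAt_of (n + 1))
  have hb : 1 ≤ gp.b := of_one_le_get?_partDen (partDen_eq_s_b hs)
  have hq := one_le_cfq α (n + 1)
  rw [cfq, cfq, cfq, dens_recurrence hs rfl rfl, of_partNum_eq_one (partNum_eq_s_a hs)]
  unfold cfq at hq
  nlinarith

theorem natCast_le_cfq : ∀ n : ℕ, (n : ℝ) ≤ cfq α n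
  | 0 => by simpa using (one_le_cfq α 0).trans' zero_le_one
  | 1 => by simpa using one_le_cfq α 1
  | n + 2 => by
    have := cfq_add_cfq_succ_le hα n
    have := natCast_le_cfq (n + 1)
    have := one_le_cfq α n
    push_cast at *
    linarith

theorem tendsto_cfq_atTop : Tendsto (cfq α) atTop atTop :=
  tendsto_atTop_mono (natCast_le_cfq hα) tendsto_natCast_atTop_atTop

theorem abs_cfq_mul_sub_cfp_le (n : ℕ) : |cfq α n * α - cfp α n| ≤ 1 / cfq α (n + 1) := by
  have h := abs_sub_convs_le (hα.not_terminatedAt_of n)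
  rw [conv_eq_num_div_den] at h
  have hq : 0 < cfq α n := one_pos.trans_le (one_le_cfq α n)
  calc |cfq α n * α - cfp α n| = cfq α n * |α - cfp α n / cfq α n| := by
        rw [← abs_of_pos hq, ← abs_mul, abs_of_pos hq, mul_sub, mul_div_cancel₀ _ hq.ne']
    _ ≤ cfq α n * (1 / (cfq α n * cfq α (n + 1))) := by gcongr; exact h
    _ = 1 / cfq α (n + 1) := by field_simp

theorem one_div_two_mul_cfq_succ_le (n : ℕ) :
    1 / (2 * cfq α (n + 1)) ≤ |cfq α n * α - cfp α n| := by
  have hdet : cfp α n * cfq α (n + 1) - cfq α n * cfp α (n + 1) = (-1) ^ (n + 1) :=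
    SimpContFract.determinant (s := SimpContFract.of α) (hα.not_terminatedAt_of n)
  have hq := one_le_cfq α n
  have hq' := one_le_cfq α (n + 1)
  have hq'' := cfq_add_cfq_succ_le hα n
  have hmono : cfq α n ≤ cfq α (n + 1) := cfq_mono α n.le_succ
  have hnext := abs_cfq_mul_sub_cfp_le hα (n + 1)
  -- With `ξ_m = q_m α - p_m`, the determinant identity reads `q_{n+1} ξ_n - q_n ξ_{n+1} = ±1`,
  -- while `q_n |ξ_{n+1}| ≤ q_n / q_{n+2} ≤ 1/2`.
  have h1 : 1 ≤ cfq α (n + 1) * |cfq α n * α - cfp α n| +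
      cfq α n * |cfq α (n + 1) * α - cfp α (n + 1)| := by
    have hone : |cfq α (n + 1) * (cfq α n * α - cfp α n) -
        cfq α n * (cfq α (n + 1) * α - cfp α (n + 1))| = 1 := by
      rw [show cfq α (n + 1) * (cfq α n * α - cfp α n) -
        cfq α n * (cfq α (n + 1) * α - cfp α (n + 1)) =
          -(cfp α n * cfq α (n + 1) - cfq α n * cfp α (n + 1)) by ring, hdet]
      simp
    calc (1 : ℝ) = _ := hone.symm
      _ ≤ _ := abs_sub _ _
      _ = _ := by
        rw [abs_mul, abs_mul, abs_of_nonneg (show 0 ≤ cfq α (n + 1) by linarith),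
          abs_of_nonneg (show 0 ≤ cfq α n by linarith)]
  have h2 : cfq α n * |cfq α (n + 1) * α - cfp α (n + 1)| ≤ 1 / 2 := by
    calc _ ≤ cfq α n * (1 / cfq α (n + 2)) := by gcongr
      _ ≤ 1 / 2 := by rw [mul_one_div, div_le_div_iff₀ (by linarith) two_pos]; linarith
  rw [div_le_iff₀ (by positivity)]
  linarith

theorem one_div_two_mul_cfq_mul_cfq_succ_le_abs_int_mul_sub {n : ℕ} {k : ℤ}
    (hk : cfq α n ≤ |(k : ℝ)|) (hk' : |(k : ℝ)| < cfq α (n + 1)) (p : ℤ) :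
    1 / (2 * cfq α n * cfq α (n + 1)) ≤ |k * α - p| := by
  obtain ⟨P, Q, hP, hQ⟩ := exists_int_cfp_eq_and_cfq_eq α n
  obtain ⟨-, Q', -, hQ'⟩ := exists_int_cfp_eq_and_cfq_eq α (n + 1)
  have hq := one_le_cfq α n
  have hq' := one_le_cfq α (n + 1)
  have hξ := abs_cfq_mul_sub_cfp_le hα n
  -- The integer `k p_n - p q_n` is either `0`, and then `|k| ≥ q_n` does the job, or it
  -- outweighs `|k ξ_n| ≤ 1 - 1/q_{n+1}`.
  have hsplit : cfq α n * (k * α - p) =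
      k * (cfq α n * α - cfp α n) + ((k * P - p * Q : ℤ) : ℝ) := by
    push_cast
    rw [← hP, ← hQ]
    ring
  suffices h : 1 / (2 * cfq α (n + 1)) ≤ cfq α n * |k * α - p| by
    rwa [mul_right_comm, ← div_div, div_le_iff₀' (by linarith)]
  rw [← abs_of_pos (one_pos.trans_le hq), ← abs_mul, hsplit]
  rcases eq_or_ne (k * P - p * Q) 0 with hD | hD
  · rw [hD, Int.cast_zero, add_zero, abs_mul]
    calc 1 / (2 * cfq α (n + 1)) ≤ 1 * |cfq α n * α - cfp α n| := by
          rw [one_mul]; exact one_div_two_mul_cfq_succ_le hα n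
      _ ≤ |(k : ℝ)| * |cfq α n * α - cfp α n| := by gcongr; linarith
  · have hD1 : (1 : ℝ) ≤ |((k * P - p * Q : ℤ) : ℝ)| := by
      rw [← Int.cast_abs]; exact_mod_cast Int.one_le_abs hD
    have hk1 : |(k : ℝ)| ≤ cfq α (n + 1) - 1 := by
      rw [hQ', ← Int.cast_abs] at hk' ⊢
      have : |k| < Q' := by exact_mod_cast hk'
      exact_mod_cast (by omega : |k| ≤ Q' - 1)
    have hkξ : |k * (cfq α n * α - cfp α n)| ≤ 1 - 1 / cfq α (n + 1) := by
      rw [abs_mul]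
      calc _ ≤ (cfq α (n + 1) - 1) * (1 / cfq α (n + 1)) := by gcongr
        _ = 1 - 1 / cfq α (n + 1) := by field_simp
    calc 1 / (2 * cfq α (n + 1)) ≤ 1 / cfq α (n + 1) := by gcongr; linarith
      _ ≤ |((k * P - p * Q : ℤ) : ℝ)| - |k * (cfq α n * α - cfp α n)| := by linarith
      _ ≤ _ := by rw [add_comm]; exact abs_sub_abs_le_abs_add _ _

theorem exp_neg_mul_div_le_abs_int_mul_sub {M : ℝ} {N₀ : ℕ}
    (hM : ∀ n, N₀ ≤ n → log (cfq α (n + 1)) / cfq α n < M) {k : ℤ}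
    (hk : cfq α N₀ ≤ |(k : ℝ)|) (p : ℤ) :
    exp (-(M * |(k : ℝ)|)) / (2 * |(k : ℝ)|) ≤ |k * α - p| := by
  obtain ⟨n, hn, hn'⟩ := exists_le_and_lt_succ_of_tendsto_atTop (tendsto_cfq_atTop hα)
    ((cfq_mono α N₀.zero_le).trans hk)
  have hN₀ : N₀ ≤ n := by
    by_contra! h
    exact (hk.trans_lt hn').not_ge (cfq_mono α h)
  have hq := one_le_cfq α n
  have hq' := one_le_cfq α (n + 1)
  have hlog := hM n hN₀
  have hM0 : 0 ≤ M := (div_nonneg (log_nonneg hq') (by linarith)).trans hlog.le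
  have hq'_le : cfq α (n + 1) ≤ exp (M * |(k : ℝ)|) := by
    rw [div_lt_iff₀ (by linarith)] at hlog
    calc cfq α (n + 1) = exp (log (cfq α (n + 1))) := (exp_log (by linarith)).symm
      _ ≤ exp (M * |(k : ℝ)|) := by gcongr; nlinarith
  calc exp (-(M * |(k : ℝ)|)) / (2 * |(k : ℝ)|)
      = 1 / (2 * |(k : ℝ)| * exp (M * |(k : ℝ)|)) := by rw [exp_neg]; field_simp
    _ ≤ 1 / (2 * cfq α n * cfq α (n + 1)) := by gcongr
    _ ≤ |k * α - p| := one_div_two_mul_cfq_mul_cfq_succ_le_abs_int_mul_sub hα hn hn' p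

end Irrational

theorem stmt6_general (α : ℝ) (hirr : Irrational α)
    (M : ℝ) (N₀ : ℕ) (hM : ∀ n : ℕ, N₀ ≤ n → Real.log (cfq α (n+1)) / cfq α n < M) :
    ∀ ε : ℝ, M / (2 * Real.pi * 0.05) < ε →
      ∃ K : ℕ, ∀ k : ℤ, K ≤ k.natAbs →
        Real.exp (-(2 * Real.pi) * |(k : ℝ)| * 0.09 * ε) <
          ‖Complex.exp (2 * Real.pi * Complex.I * k * α) - 1‖ := by
  intro ε hε
  have hM0 : 0 < M := (div_nonneg (log_nonneg (one_le_cfq α _))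
    (zero_le_one.trans (one_le_cfq α _))).trans_lt (hM N₀ le_rfl)
  have hMc : M < 2 * π * 0.09 * ε := by
    rw [div_lt_iff₀ (by positivity)] at hε
    nlinarith [pi_pos]
  obtain ⟨X, hX⟩ := eventually_atTop.1 (eventually_exp_neg_mul_lt hMc)
  refine ⟨⌈max X (cfq α N₀)⌉₊, fun k hk => ?_⟩
  have hkX : max X (cfq α N₀) ≤ |(k : ℝ)| := by
    simpa [Nat.cast_natAbs] using Nat.ceil_le.1 hk
  calc exp (-(2 * π) * |(k : ℝ)| * 0.09 * ε) = exp (-(2 * π * 0.09 * ε * |(k : ℝ)|)) := by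
        ring_nf
    _ < 2 * exp (-(M * |(k : ℝ)|)) / |(k : ℝ)| := hX _ (le_of_max_le_left hkX)
    _ = 4 * (exp (-(M * |(k : ℝ)|)) / (2 * |(k : ℝ)|)) := by ring
    _ ≤ 4 * |k * α - round (k * α)| := by
        gcongr
        exact exp_neg_mul_div_le_abs_int_mul_sub hirr hM (le_of_max_le_right hkX) _
    _ ≤ _ := by simpa [mul_assoc] using four_mul_abs_sub_round_le_norm_exp_sub_one (k * α)

/-- If `log(q_{n+1})/q_n < M` eventually, then for each `ε > M/(2π·0.05)` and
all sufficiently large `|k|`, `|e^{2πikα} − 1| > e^{−2π|k|·0.09·ε}`. -/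
theorem stmt6 (α : ℝ) (hirr : Irrational α) (hα : α ∈ Set.Ioo (0:ℝ) 1)
    (M : ℝ) (N₀ : ℕ) (hM : ∀ n : ℕ, N₀ ≤ n → Real.log (cfq α (n+1)) / cfq α n < M) :
    ∀ ε : ℝ, M / (2 * Real.pi * 0.05) < ε →
      ∃ K : ℕ, ∀ k : ℤ, K ≤ k.natAbs →
        Real.exp (-(2 * Real.pi) * |(k : ℝ)| * 0.09 * ε) <
          ‖Complex.exp (2 * Real.pi * Complex.I * k * α) - 1‖ :=
  stmt6_general α hirr M N₀ hM
end

section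
/- Cohomological equation via Fourier series: let α be irrational and suppose there exist δ ∈ (0, ε) and k₀ such that |e^{2πikα} − 1| > e^{−2π|k|δ} for all |k| ≥ k₀. Let v be a bounded holomorphic 1-periodic function on the strip {|Im z| < ε} with zero mean ∫₀¹ v(x)dx = 0. Then for every ε' < ε − δ there exists a holomorphic 1-periodic function h on {|Im z| < ε'} solving h(z + α) − h(z) = v(z), unique up to an additive constant. -/
/-!
Write `e_k(z) = exp (2πikz)` and `a_k` for the Fourier coefficients of `v` on the real line.
Shifting the contour of the coefficient integral to height `∓s` gives `‖a_k‖ ≤ V e^{-2π|k|s}`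
for every `s < ε`. The equation is diagonal in the modes `e_k`, so `b_k = a_k / (e_k(α) - 1)`;
the small-divisor hypothesis costs at most a factor `e^{2π|k|δ}`, leaving decay
`e^{-2π|k|(s-δ)}`, so `∑ b_k e_k` is holomorphic on `|Im z| < ε'`. The difference of two solutions
is invariant under translation by `1` and `α`, hence by the dense group `ℤ + αℤ`, hence by every
real translation, so its derivative vanishes.
-/

open Complex Real Filter Set

noncomputable section

def fourierExp (k : ℤ) (z : ℂ) : ℂ := Complex.exp (2 * π * I * k * z)

def strip (r : ℝ) : Set ℂ := {z | |z.im| < r}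

theorem mem_strip {r : ℝ} {z : ℂ} : z ∈ strip r ↔ |z.im| < r := Iff.rfl

theorem isOpen_strip (r : ℝ) : IsOpen (strip r) :=
  isOpen_lt continuous_im.abs continuous_const

theorem convex_strip (r : ℝ) : Convex ℝ (strip r) := by
  have : strip r = imLm ⁻¹' Ioo (-r) r := by ext; simp [mem_strip, abs_lt]
  exact this ▸ (convex_Ioo _ _).linear_preimage _

theorem add_ofReal_mem_strip {r : ℝ} {z : ℂ} (t : ℝ) : z + t ∈ strip r ↔ z ∈ strip r := by
  simp [mem_strip]

theorem differentiable_fourierExp (k : ℤ) : Differentiable ℂ (fourierExp k) := by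
  unfold fourierExp; fun_prop

theorem fourierExp_add (k : ℤ) (z w : ℂ) :
    fourierExp k (z + w) = fourierExp k z * fourierExp k w := by
  simp only [fourierExp, ← Complex.exp_add]; ring_nf

theorem fourierExp_zero (z : ℂ) : fourierExp 0 z = 1 := by simp [fourierExp]

theorem fourierExp_neg_mul_self (k : ℤ) (z : ℂ) : fourierExp (-k) z * fourierExp k z = 1 := by
  simp [fourierExp, ← Complex.exp_add]

theorem fourierExp_one (k : ℤ) : fourierExp k 1 = 1 := by
  rw [fourierExp, mul_one, mul_comm, exp_int_mul_two_pi_mul_I]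

theorem fourierExp_add_one (k : ℤ) (z : ℂ) : fourierExp k (z + 1) = fourierExp k z := by
  rw [fourierExp_add, fourierExp_one, mul_one]

theorem norm_fourierExp (k : ℤ) (z : ℂ) :
    ‖fourierExp k z‖ = Real.exp (-(2 * π) * k * z.im) := by
  simp [fourierExp, Complex.norm_exp]

theorem norm_fourierExp_le (k : ℤ) (z : ℂ) :
    ‖fourierExp k z‖ ≤ Real.exp (2 * π * |(k : ℝ)| * |z.im|) := by
  have h := neg_abs_le ((k : ℝ) * z.im)
  rw [abs_mul] at h
  rw [norm_fourierExp, Real.exp_le_exp]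
  nlinarith [pi_pos]

theorem fourier_coe_eq_fourierExp (k : ℤ) (x : ℝ) :
    fourier k (x : AddCircle (1 : ℝ)) = fourierExp k x := by
  simp [fourierExp]

theorem fourierExp_ne_one {α : ℝ} (hα : Irrational α) {k : ℤ} (hk : k ≠ 0) :
    fourierExp k α ≠ 1 := by
  rw [fourierExp, Ne, Complex.exp_eq_one_iff]
  rintro ⟨n, hn⟩
  have : (k * α : ℂ) = n := mul_right_cancel₀ two_pi_I_ne_zero (by linear_combination hn)
  exact (hα.intCast_mul hk).ne_int n (by exact_mod_cast this)

theorem summable_exp_mul_abs {c : ℝ} (hc : c < 0) :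
    Summable fun k : ℤ => Real.exp (c * |(k : ℝ)|) := by
  have := Real.summable_exp_nat_mul_iff.mpr hc
  exact .of_nat_of_neg (by simpa [mul_comm] using this) (by simpa [mul_comm] using this)

theorem summable_norm_mul_exp {b : ℤ → ℂ} {C ρ r : ℝ} (hr : r < ρ)
    (hb : ∀ᶠ k in cofinite, ‖b k‖ ≤ C * Real.exp (-(2 * π) * |(k : ℝ)| * ρ)) :
    Summable fun k => ‖b k‖ * Real.exp (2 * π * |(k : ℝ)| * r) := by
  have hc : -(2 * π) * (ρ - r) < 0 := by nlinarith [pi_pos]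
  refine .of_norm_bounded_eventually ((summable_exp_mul_abs hc).mul_left C) ?_
  filter_upwards [hb] with k hk
  rw [Real.norm_of_nonneg (by positivity)]
  calc ‖b k‖ * Real.exp (2 * π * |(k : ℝ)| * r)
      ≤ C * Real.exp (-(2 * π) * |(k : ℝ)| * ρ) * Real.exp (2 * π * |(k : ℝ)| * r) := by gcongr
    _ = C * Real.exp (-(2 * π) * (ρ - r) * |(k : ℝ)|) := by
      rw [mul_assoc, ← Real.exp_add]; ring_nf

def fourierSum (b : ℤ → ℂ) (z : ℂ) : ℂ := ∑' k, b k * fourierExp k z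

theorem norm_mul_fourierExp_le (b : ℤ → ℂ) {r : ℝ} {z : ℂ} (hz : |z.im| ≤ r) (k : ℤ) :
    ‖b k * fourierExp k z‖ ≤ ‖b k‖ * Real.exp (2 * π * |(k : ℝ)| * r) := by
  rw [norm_mul]
  gcongr
  exact (norm_fourierExp_le k z).trans (by gcongr)

theorem hasSum_fourierSum {b : ℤ → ℂ} {r : ℝ}
    (hb : Summable fun k => ‖b k‖ * Real.exp (2 * π * |(k : ℝ)| * r)) {z : ℂ} (hz : z ∈ strip r) :
    HasSum (fun k => b k * fourierExp k z) (fourierSum b z) :=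
  (hb.of_norm_bounded (norm_mul_fourierExp_le b hz.le)).hasSum

theorem differentiableOn_fourierSum {b : ℤ → ℂ} {r : ℝ}
    (hb : Summable fun k => ‖b k‖ * Real.exp (2 * π * |(k : ℝ)| * r)) :
    DifferentiableOn ℂ (fourierSum b) (strip r) :=
  differentiableOn_tsum_of_summable_norm hb
    (fun k => ((differentiable_fourierExp k).const_mul (b k)).differentiableOn) (isOpen_strip r)
    (fun k _ hz => norm_mul_fourierExp_le b (le_of_lt hz) k)

theorem fourierSum_add_one (b : ℤ → ℂ) (z : ℂ) : fourierSum b (z + 1) = fourierSum b z := by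
  simp only [fourierSum, fourierExp_add_one]

theorem hasSum_fourierSum_add_sub {b : ℤ → ℂ} {r : ℝ}
    (hb : Summable fun k => ‖b k‖ * Real.exp (2 * π * |(k : ℝ)| * r)) (α : ℝ) {z : ℂ}
    (hz : z ∈ strip r) :
    HasSum (fun k => b k * (fourierExp k α - 1) * fourierExp k z)
      (fourierSum b (z + α) - fourierSum b z) := by
  refine ((hasSum_fourierSum hb ((add_ofReal_mem_strip α).2 hz)).sub
    (hasSum_fourierSum hb hz)).congr_fun fun k => ?_
  rw [add_comm z, fourierExp_add]
  ring

theorem integral_add_mul_I_eq_of_periodic {f : ℂ → ℂ} {ε y : ℝ}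
    (hf : DifferentiableOn ℂ f (strip ε)) (hper : ∀ z ∈ strip ε, f (z + 1) = f z)
    (hy : |y| < ε) :
    ∫ x in (0 : ℝ)..1, f (x + y * I) = ∫ x in (0 : ℝ)..1, f x := by
  have mem_of_uIcc : ∀ t ∈ uIcc 0 y, |t| < ε := fun t ht =>
    (by simpa using abs_sub_left_of_mem_uIcc ht : |t| ≤ |y|).trans_lt hy
  have rect := integral_boundary_rect_eq_zero_of_differentiableOn f 0 (1 + y * I) <| hf.mono
    fun w hw => mem_of_uIcc w.im (by simpa using ((mem_reProdIm.1 hw).2))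
  have vertical : ∫ t in (0 : ℝ)..y, f (1 + t * I) = ∫ t in (0 : ℝ)..y, f (t * I) :=
    intervalIntegral.integral_congr fun t ht => by
      rw [add_comm]; exact hper _ (by simpa [mem_strip] using mem_of_uIcc t ht)
  simp only [zero_re, zero_im, add_re, one_re, mul_re, ofReal_re, I_re, ofReal_im, I_im,
    add_im, one_im, mul_im] at rect
  norm_num at rect
  rw [vertical] at rect
  linear_combination -rect

theorem hasSum_fourier_of_periodic {f : ℝ → ℂ} (hf : Continuous f)
    (hper : Function.Periodic f 1)
    (hsum : Summable fun k : ℤ => ∫ t in (0 : ℝ)..1, f t * fourierExp (-k) t) (x : ℝ) :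
    HasSum (fun k : ℤ => (∫ t in (0 : ℝ)..1, f t * fourierExp (-k) t) * fourierExp k x) (f x) := by
  let F : C(AddCircle (1 : ℝ), ℂ) := ⟨hper.lift, continuous_quot_lift _ hf⟩
  have hcoeff : ∀ k : ℤ, fourierCoeff F k = ∫ t in (0 : ℝ)..1, f t * fourierExp (-k) t := by
    intro k
    rw [fourierCoeff_eq_intervalIntegral F k 0, zero_add, div_one, one_smul]
    refine intervalIntegral.integral_congr fun t _ => ?_
    show fourier (-k) (t : AddCircle (1 : ℝ)) • hper.lift (t : AddCircle (1 : ℝ)) = _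
    rw [fourier_coe_eq_fourierExp, hper.lift_coe, smul_eq_mul, mul_comm]
  have hcoeff' : fourierCoeff F = _ := funext hcoeff
  have h := has_pointwise_sum_fourier_series_of_summable (hcoeff' ▸ hsum) (x : AddCircle (1 : ℝ))
  simp only [hcoeff', fourier_coe_eq_fourierExp, smul_eq_mul] at h
  rwa [show F x = f x from hper.lift_coe x] at h

def realFourierCoeff (v : ℂ → ℂ) (k : ℤ) : ℂ := ∫ x in (0 : ℝ)..1, v x * fourierExp (-k) x

section Strip

variable {v : ℂ → ℂ} {ε : ℝ}

theorem realFourierCoeff_eq_integral_add_mul_I (hv : DifferentiableOn ℂ v (strip ε))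
    (hvper : ∀ z ∈ strip ε, v (z + 1) = v z) (k : ℤ) {y : ℝ} (hy : |y| < ε) :
    realFourierCoeff v k =
      ∫ x in (0 : ℝ)..1, v (x + y * I) * fourierExp (-k) (x + y * I) := by
  refine (integral_add_mul_I_eq_of_periodic
    (hv.mul (differentiable_fourierExp (-k)).differentiableOn) (fun z hz => ?_) hy).symm
  simp only [Pi.mul_apply, hvper z hz, fourierExp_add_one]

theorem norm_realFourierCoeff_le {V : ℝ} (hv : DifferentiableOn ℂ v (strip ε))
    (hvb : ∀ z ∈ strip ε, ‖v z‖ ≤ V) (hvper : ∀ z ∈ strip ε, v (z + 1) = v z) (k : ℤ)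
    {s : ℝ} (hs : |s| < ε) :
    ‖realFourierCoeff v k‖ ≤ V * Real.exp (-(2 * π) * |(k : ℝ)| * s) := by
  -- shift the contour to height `-s · sign k`, where `e_{-k}` has modulus `exp (-2π|k|s)`
  set y : ℝ := if 0 ≤ k then -s else s
  have hy : |y| < ε := by unfold y; split_ifs <;> simpa
  have hexp : -(2 * π) * ((-k : ℤ) : ℝ) * y = -(2 * π) * |(k : ℝ)| * s := by
    unfold y
    split_ifs with hk
    · rw [abs_of_nonneg (by exact_mod_cast hk)]; push_cast; ring
    · rw [abs_of_neg (by exact_mod_cast not_le.1 hk)]; push_cast; ring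
  have hbound : ∀ x : ℝ, ‖v (x + y * I) * fourierExp (-k) (x + y * I)‖ ≤
      V * Real.exp (-(2 * π) * |(k : ℝ)| * s) := fun x => by
    rw [norm_mul, norm_fourierExp]
    simp only [add_im, ofReal_im, mul_im, ofReal_re, I_im, I_re, mul_zero, zero_add, mul_one,
      add_zero]
    rw [hexp]
    exact mul_le_mul_of_nonneg_right (hvb _ (by simpa [mem_strip] using hy)) (Real.exp_nonneg _)
  rw [realFourierCoeff_eq_integral_add_mul_I hv hvper k hy]
  simpa using
    intervalIntegral.norm_integral_le_of_norm_le_const (a := 0) (b := 1) fun x _ => hbound x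

theorem hasSum_realFourierCoeff_mul_fourierExp {V : ℝ} (hv : DifferentiableOn ℂ v (strip ε))
    (hvb : ∀ z ∈ strip ε, ‖v z‖ ≤ V) (hvper : ∀ z ∈ strip ε, v (z + 1) = v z)
    {z : ℂ} (hz : z ∈ strip ε) :
    HasSum (fun k => realFourierCoeff v k * fourierExp k z) (v z) := by
  have hz' : |z.im| < ε := hz
  have hline : ∀ x : ℝ, (x + z.im * I : ℂ) ∈ strip ε := fun x => by simpa [mem_strip] using hz
  have hcont : Continuous fun x : ℝ => v (x + z.im * I) :=
    hv.continuousOn.comp_continuous (by fun_prop) hline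
  have hper : Function.Periodic (fun x : ℝ => v (x + z.im * I)) 1 := fun x => by
    simpa [add_right_comm] using hvper _ (hline x)
  have hcoeff : ∀ k : ℤ, ∫ t in (0 : ℝ)..1, v (t + z.im * I) * fourierExp (-k) t =
      realFourierCoeff v k * fourierExp k (z.im * I) := by
    intro k
    rw [realFourierCoeff_eq_integral_add_mul_I hv hvper k hz,
      ← intervalIntegral.integral_mul_const]
    refine intervalIntegral.integral_congr fun t _ => ?_
    rw [fourierExp_add, mul_assoc, mul_assoc, fourierExp_neg_mul_self, mul_one]
  have hρ : |(|z.im| + ε) / 2| < ε := abs_lt.2 ⟨by linarith [abs_nonneg z.im], by linarith⟩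
  have hsum : Summable fun k => realFourierCoeff v k * fourierExp k (z.im * I) :=
    .of_norm_bounded (summable_norm_mul_exp (r := |z.im|) (by linarith)
      (.of_forall fun k => norm_realFourierCoeff_le hv hvb hvper k hρ))
      fun k => norm_mul_fourierExp_le _ (by simp) k
  have h := hasSum_fourier_of_periodic hcont hper (by simpa only [hcoeff] using hsum) z.re
  rw [re_add_im] at h
  refine h.congr_fun fun k => ?_
  rw [hcoeff, mul_assoc, ← fourierExp_add, add_comm, re_add_im]

end Strip

theorem eventually_norm_div_fourierExp_sub_one_le {a : ℤ → ℂ} {α δ C s : ℝ} {k₀ : ℕ}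
    (hsd : ∀ k : ℤ, k₀ ≤ k.natAbs →
      Real.exp (-(2 * π) * |(k : ℝ)| * δ) < ‖fourierExp k α - 1‖)
    (ha : ∀ k, ‖a k‖ ≤ C * Real.exp (-(2 * π) * |(k : ℝ)| * s)) :
    ∀ᶠ k in cofinite,
      ‖a k / (fourierExp k α - 1)‖ ≤ C * Real.exp (-(2 * π) * |(k : ℝ)| * (s - δ)) := by
  have hlarge : ∀ᶠ k : ℤ in cofinite, k₀ ≤ k.natAbs :=
    eventually_cofinite.2 <| (finite_Ioo (-(k₀ : ℤ)) k₀).subset fun k hk => by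
      simp only [mem_ofPred_eq, not_le, mem_Ioo] at hk ⊢
      omega
  filter_upwards [hlarge] with k hk
  rw [norm_div]
  calc ‖a k‖ / ‖fourierExp k α - 1‖
      ≤ ‖a k‖ / Real.exp (-(2 * π) * |(k : ℝ)| * δ) :=
        div_le_div_of_nonneg_left (norm_nonneg _) (Real.exp_pos _) (hsd k hk).le
    _ ≤ C * Real.exp (-(2 * π) * |(k : ℝ)| * s) / Real.exp (-(2 * π) * |(k : ℝ)| * δ) :=
        div_le_div_of_nonneg_right (ha k) (Real.exp_pos _).le
    _ = C * Real.exp (-(2 * π) * |(k : ℝ)| * (s - δ)) := by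
        rw [mul_div_assoc, ← Real.exp_sub]; ring_nf

theorem eq_apply_zero_of_periodic_of_irrational {X : Type*} [TopologicalSpace X] [T2Space X]
    {f : ℝ → X} {α : ℝ} (hα : Irrational α) (hf : Continuous f)
    (h1 : Function.Periodic f 1) (hα' : Function.Periodic f α) (t : ℝ) : f t = f 0 := by
  have hdense : Dense (AddSubgroup.closure {α, 1} : Set ℝ) :=
    dense_addSubgroupClosure_pair_iff.2 (by rwa [div_one])
  have hperiods : ∀ p ∈ AddSubgroup.closure {α, 1}, Function.Periodic f p := by
    intro p hp
    induction hp using AddSubgroup.closure_induction with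
    | mem p hp => rcases hp with rfl | rfl; exacts [hα', h1]
    | zero => exact fun x => by simp
    | add p q _ _ hp hq => exact hp.add_period hq
    | neg p _ hp => exact hp.neg
  have := hf.ext_on hdense continuous_const fun p hp => by simpa using hperiods p hp 0
  exact congrFun this t

theorem eq_of_forall_add_ofReal_eq {g : ℂ → ℂ} {r : ℝ} (hg : DifferentiableOn ℂ g (strip r))
    (hinv : ∀ z ∈ strip r, ∀ t : ℝ, g (z + t) = g z) {z w : ℂ} (hz : z ∈ strip r)
    (hw : w ∈ strip r) : g z = g w := by
  refine (isOpen_strip r).is_const_of_deriv_eq_zero (convex_strip r).isPreconnected hg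
    (fun u hu => ?_) hz hw
  -- `deriv g u` is also the derivative of the constant map `t ↦ g (u + t)`
  have hgu : HasDerivAt g (deriv g u) (u + ((0 : ℝ) : ℂ)) := by
    simpa using (hg.differentiableAt ((isOpen_strip r).mem_nhds hu)).hasDerivAt
  have hder : HasDerivAt (fun t : ℝ => g (u + t)) (deriv g u) 0 :=
    (hgu.comp_const_add u _).comp_ofReal
  simp only [hinv u hu] at hder
  exact hder.unique (hasDerivAt_const _ _)

theorem eq_of_periodic_of_irrational {g : ℂ → ℂ} {r α : ℝ} (hα : Irrational α)
    (hg : DifferentiableOn ℂ g (strip r)) (h1 : ∀ z ∈ strip r, g (z + 1) = g z)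
    (hα' : ∀ z ∈ strip r, g (z + α) = g z) {z w : ℂ} (hz : z ∈ strip r) (hw : w ∈ strip r) :
    g z = g w := by
  refine eq_of_forall_add_ofReal_eq hg (fun z hz t => ?_) hz hw
  have hline : ∀ t : ℝ, z + t ∈ strip r := fun t => (add_ofReal_mem_strip t).2 hz
  simpa using eq_apply_zero_of_periodic_of_irrational hα
    (hg.continuousOn.comp_continuous (by fun_prop) hline)
    (fun t => by simpa [add_assoc] using h1 _ (hline t))
    (fun t => by simpa [add_assoc] using hα' _ (hline t)) t

end

theorem stmt9_general (α : ℝ) (hirr : Irrational α) (ε δ : ℝ) (hδ : 0 < δ)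
    (k₀ : ℕ)
    (hsd : ∀ k : ℤ, k₀ ≤ k.natAbs →
      Real.exp (-(2 * Real.pi) * |(k : ℝ)| * δ) <
        ‖Complex.exp (2 * Real.pi * Complex.I * k * α) - 1‖)
    (v : ℂ → ℂ) (V : ℝ)
    (hv : DifferentiableOn ℂ v {z : ℂ | |z.im| < ε})
    (hvb : ∀ z : ℂ, |z.im| < ε → ‖v z‖ ≤ V)
    (hvper : ∀ z : ℂ, |z.im| < ε → v (z + 1) = v z)
    (hmean : (∫ x in (0:ℝ)..1, v x) = 0) :
    ∀ ε' : ℝ, 0 < ε' → ε' < ε - δ →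
      ∃ h : ℂ → ℂ,
        DifferentiableOn ℂ h {z : ℂ | |z.im| < ε'} ∧
        (∀ z : ℂ, |z.im| < ε' → h (z + 1) = h z) ∧
        (∀ z : ℂ, |z.im| < ε' → h (z + α) - h z = v z) ∧
        (∀ h₂ : ℂ → ℂ,
          DifferentiableOn ℂ h₂ {z : ℂ | |z.im| < ε'} →
          (∀ z : ℂ, |z.im| < ε' → h₂ (z + 1) = h₂ z) →
          (∀ z : ℂ, |z.im| < ε' → h₂ (z + α) - h₂ z = v z) →
          ∃ c : ℂ, ∀ z : ℂ, |z.im| < ε' → h₂ z = h z + c) := by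
  intro ε' hε' hε'δ
  -- at `k = 0` this divides by zero, so `b 0 = 0`
  let b : ℤ → ℂ := fun k => realFourierCoeff v k / (fourierExp k α - 1)
  have hb_mul : ∀ k, b k * (fourierExp k α - 1) = realFourierCoeff v k := by
    intro k
    rcases eq_or_ne k 0 with rfl | hk
    · simp [b, realFourierCoeff, fourierExp_zero, hmean]
    · exact div_mul_cancel₀ _ (sub_ne_zero.2 (fourierExp_ne_one hirr hk))
  have hs : |(ε + δ + ε') / 2| < ε := abs_lt.2 ⟨by linarith, by linarith⟩
  have hb : Summable fun k => ‖b k‖ * Real.exp (2 * π * |(k : ℝ)| * ε') :=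
    summable_norm_mul_exp (by linarith) <| eventually_norm_div_fourierExp_sub_one_le hsd
      fun k => norm_realFourierCoeff_le hv hvb hvper k hs
  have hsolves : ∀ z ∈ strip ε', fourierSum b (z + α) - fourierSum b z = v z := fun z hz =>
    (by simpa only [hb_mul] using hasSum_fourierSum_add_sub hb α hz : HasSum _ _).unique <|
      hasSum_realFourierCoeff_mul_fourierExp hv hvb hvper (lt_trans hz (by linarith : ε' < ε))
  refine ⟨fourierSum b, differentiableOn_fourierSum hb, fun z _ => fourierSum_add_one b z,
    hsolves, fun h₂ hd₂ hper₂ hsolves₂ => ⟨h₂ 0 - fourierSum b 0, fun z hz => ?_⟩⟩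
  have := eq_of_periodic_of_irrational (g := fun w => h₂ w - fourierSum b w) hirr
    (hd₂.sub (differentiableOn_fourierSum hb))
    (fun w hw => by simp only [hper₂ w hw, fourierSum_add_one])
    (fun w hw => by linear_combination hsolves₂ w hw - hsolves w hw) hz
    (show (0 : ℂ) ∈ strip ε' by simpa [mem_strip])
  linear_combination this

/-- Solution of the cohomological equation `h(z+α) − h(z) = v(z)` on a smaller
strip, under a small-divisor condition on `α`, unique up to an additive
constant. -/
theorem stmt9 (α : ℝ) (hirr : Irrational α) (ε δ : ℝ) (hδ : 0 < δ) (hδε : δ < ε)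
    (k₀ : ℕ)
    (hsd : ∀ k : ℤ, k₀ ≤ k.natAbs →
      Real.exp (-(2 * Real.pi) * |(k : ℝ)| * δ) <
        ‖Complex.exp (2 * Real.pi * Complex.I * k * α) - 1‖)
    (v : ℂ → ℂ) (V : ℝ)
    (hv : DifferentiableOn ℂ v {z : ℂ | |z.im| < ε})
    (hvb : ∀ z : ℂ, |z.im| < ε → ‖v z‖ ≤ V)
    (hvper : ∀ z : ℂ, |z.im| < ε → v (z + 1) = v z)
    (hmean : (∫ x in (0:ℝ)..1, v x) = 0) :
    ∀ ε' : ℝ, 0 < ε' → ε' < ε - δ →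
      ∃ h : ℂ → ℂ,
        DifferentiableOn ℂ h {z : ℂ | |z.im| < ε'} ∧
        (∀ z : ℂ, |z.im| < ε' → h (z + 1) = h z) ∧
        (∀ z : ℂ, |z.im| < ε' → h (z + α) - h z = v z) ∧
        (∀ h₂ : ℂ → ℂ,
          DifferentiableOn ℂ h₂ {z : ℂ | |z.im| < ε'} →
          (∀ z : ℂ, |z.im| < ε' → h₂ (z + 1) = h₂ z) →
          (∀ z : ℂ, |z.im| < ε' → h₂ (z + α) - h₂ z = v z) →
          ∃ c : ℂ, ∀ z : ℂ, |z.im| < ε' → h₂ z = h z + c) :=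
  stmt9_general α hirr ε δ hδ k₀ hsd v V hv hvb hvper hmean
end
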